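/- arXiv:2004.07247 — 3 statements merged into one kernel-verified Lean document; each statement's English description precedes it below -/
import Mathlib

section
/- (Support property of the sweep rule) Let σ(1) = σ be an initial syndrome in a causal code, and at each time step define σ(T+1) = σ(T) + Σ_{u trailing} ∂φ(u), where for each trailing location u the returned qubit set φ(u) satisfies ◊(∂φ(u)) = ◊(σ(T)|_u). Then for all T, σ(T) ⊆ ◊(σ), i.e., every location appearing in σ(T) lies in the causal diamond of the original syndrome. -/
open scoped symmDiff

/-!
Each sweep step adds to `σ T` only sets whose diamonds already lie in `D (σ T)`, and the
union property of diamonds then gives `D (σ (T + 1)) ⊆ D (σ T)`. The diamonds `D (σ T)`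
therefore shrink along the sweep, so `σ T ⊆ D (σ T) ⊆ D (σ 1)`.
-/

section CausalDiamond

variable {V : Type*} {D : Set V → Set V}

theorem diamond_union_subset
    (hunion : ∀ (ι : Type) (s : ι → Set V) (C : Set V),
      (∀ i, D (s i) ⊆ D C) → D (⋃ i, s i) ⊆ D C)
    {A B C : Set V} (hA : D A ⊆ D C) (hB : D B ⊆ D C) : D (A ∪ B) ⊆ D C := by
  rw [Set.union_eq_iUnion]
  exact hunion Bool _ C (Bool.rec hB hA)

theorem diamond_symmDiff_iUnion_subset
    (hmono : ∀ U W : Set V, U ⊆ W → D U ⊆ D W)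
    (hunion : ∀ (ι : Type) (s : ι → Set V) (C : Set V),
      (∀ i, D (s i) ⊆ D C) → D (⋃ i, s i) ⊆ D C)
    {ι : Type} {A : Set V} {s : ι → Set V} (hs : ∀ i, D (s i) ⊆ D A) :
    D (A ∆ ⋃ i, s i) ⊆ D A :=
  (hmono _ _ Set.symmDiff_subset_union).trans
    (diamond_union_subset hunion subset_rfl (hunion ι s A hs))

end CausalDiamond

/-- support property of the sweep rule: let `D` be the causal diamond
operator of a causal code, satisfying `U ⊆ D U`, monotonicity, and the property that a
union of sets whose diamonds lie in `D C` has its diamond in `D C`. If the syndrome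
is updated at each step by adding (symmetric difference) boundaries `∂φ(u)` of returned
qubit sets whose causal diamonds equal the diamonds of the restrictions
`σ(T)|_u ⊆ σ(T)` (hence lie in `D (σ T)`), then `σ T ⊆ D (σ 1)` for all `T ≥ 1`. -/
theorem sweep_support {V : Type*} (D : Set V → Set V)
    (hsub : ∀ U : Set V, U ⊆ D U)
    (hmono : ∀ U W : Set V, U ⊆ W → D U ⊆ D W)
    (hunion : ∀ (ι : Type) (s : ι → Set V) (C : Set V),
      (∀ i, D (s i) ⊆ D C) → D (⋃ i, s i) ⊆ D C)
    (σ : ℕ → Set V)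
    (hstep : ∀ T, 1 ≤ T → ∃ (ι : Type) (φbnd : ι → Set V),
      (∀ u : ι, D (φbnd u) ⊆ D (σ T)) ∧
      σ (T + 1) = σ T ∆ (⋃ u, φbnd u)) :
    ∀ T, 1 ≤ T → σ T ⊆ D (σ 1) := by
  have diamond_step : ∀ T, 1 ≤ T → D (σ (T + 1)) ⊆ D (σ T) := by
    intro T hT
    obtain ⟨ι, φbnd, hφ, hσ⟩ := hstep T hT
    rw [hσ]
    exact diamond_symmDiff_iUnion_subset hmono hunion hφ
  intro T hT
  have diamond_shrinks : D (σ T) ⊆ D (σ 1) :=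
    Nat.le_induction subset_rfl (fun n hn ih => (diamond_step n hn).trans ih) T hT
  exact (hsub (σ T)).trans diamond_shrinks
end

section
/- Let Q ≥ 6·|Ω|·c_P·c_D⁸ and suppose M is a Qⁿ-connected component of Fₙ in the chunk decomposition of an error ε. If the sweep rule removes the syndrome of M within |Ω|·c_P·c_D⁸·Qⁿ time steps and the syndrome propagates at most one lattice step per application (propagation ≤ T), then during the removal of M, the syndrome of M never comes within distance Qⁿ⁺¹/3 − c_P c_D⁸ |Ω| Qⁿ > 0 of the syndrome of Eₙ \ M; hence M is corrected independently of the rest of the error. -/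
theorem sub_lt_dist_of_lt_dist_of_dist_le {X : Type*} [PseudoMetricSpace X] {a b x : X}
    {r t : ℝ} (hab : r < dist a b) (hxa : dist x a ≤ t) : r - t < dist x b := by
  linarith [dist_triangle_left a b x]

theorem mul_pow_lt_pow_succ_div_three {c Q : ℝ} (hc : 0 ≤ c) (hQ : 3 * c < Q) (n : ℕ) :
    c * Q ^ n < Q ^ (n + 1) / 3 := by
  have hQn : 0 < Q ^ n := pow_pos (by linarith) n
  rw [pow_succ]
  nlinarith

/-- let `M` (a `Qⁿ`-connected component of `Fₙ`) and `B` (the syndrome of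
`Eₙ \ M`) be separated by distance greater than `Qⁿ⁺¹/3`, and let the syndrome `σ` of `M`
propagate at most one lattice step per time step (`d(x, M) ≤ T` for `x ∈ σ T`). If
`Q ≥ 6·|Ω|·c_P·c_D⁸` and the removal time satisfies `T_rem ≤ |Ω|·c_P·c_D⁸·Qⁿ`, then
during removal the syndrome of `M` never comes within distance
`Qⁿ⁺¹/3 − |Ω|·c_P·c_D⁸·Qⁿ > 0` of `B`; hence `M` is corrected independently. -/
theorem independent_correction {X : Type*} [MetricSpace X]
    (nΩ cP cD Q : ℝ) (n : ℕ)
    (hnΩ : 1 ≤ nΩ) (hcP : 1 ≤ cP) (hcD : 1 ≤ cD)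
    (hQ : 6 * nΩ * cP * cD ^ 8 ≤ Q)
    (M B : Set X) (σ : ℕ → Set X) (Trem : ℕ)
    (hTrem : (Trem : ℝ) ≤ nΩ * cP * cD ^ 8 * Q ^ n)
    (hsep : ∀ a ∈ M, ∀ b ∈ B, Q ^ (n + 1) / 3 < dist a b)
    (hprop : ∀ T ≤ Trem, ∀ x ∈ σ T, ∃ a ∈ M, dist x a ≤ (T : ℝ)) :
    0 < Q ^ (n + 1) / 3 - nΩ * cP * cD ^ 8 * Q ^ n ∧
    ∀ T ≤ Trem, ∀ x ∈ σ T, ∀ b ∈ B,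
      Q ^ (n + 1) / 3 - nΩ * cP * cD ^ 8 * Q ^ n < dist x b := by
  have hc : 1 ≤ nΩ * cP * cD ^ 8 :=
    one_le_mul_of_one_le_of_one_le (one_le_mul_of_one_le_of_one_le hnΩ hcP) (one_le_pow₀ hcD)
  have hgap : nΩ * cP * cD ^ 8 * Q ^ n < Q ^ (n + 1) / 3 :=
    mul_pow_lt_pow_succ_div_three (by linarith) (by linarith) n
  refine ⟨sub_pos.2 hgap, fun T hT x hx b hb => ?_⟩
  obtain ⟨a, ha, hxa⟩ := hprop T hT x hx
  have hTrem' : (T : ℝ) ≤ nΩ * cP * cD ^ 8 * Q ^ n := (Nat.cast_le.2 hT).trans hTrem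
  exact sub_lt_dist_of_lt_dist_of_dist_le (hsep a ha b hb) (hxa.trans hTrem')
end

section
/- In the rhombic dodecahedral lattice with sweep direction ω = (1,1,1), every face (rhombus) f, regarded as its set of four vertices with the induced partial order, contains its infimum: there is a unique vertex v ∈ f with v ≼ u for all u ∈ f. -/
/-!
Every face `a b c d` is a parallelogram, `a + c = b + d`. Coordinatewise, a closed walk
`x, y, z, w` in `ℤ` with unit steps either has `x + z = y + w` or is degenerate (`x = z` and
`y = w`). Since `a ≠ c` and `b ≠ d`, a degenerate coordinate would make the two cube centers of
the face differ in exactly one coordinate, by `2`, contradicting that both have coordinate sum `≡ 1 (mod 4)`.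

Hence the height increments `ω · (next - current)` around the face are `s, t, -s, -t` with
`s, t ≠ 0` (no edge is perpendicular to `ω`). So exactly one vertex lies below both of its
neighbours, and the two increasing edges leaving it reach the whole face. Uniqueness holds
because the height strictly increases along every step, which makes `≼` antisymmetric.
-/

/-- Vertices of the rhombic dodecahedral lattice, with all coordinates scaled by 2:
cubic vertices (all coordinates even) and cube centers (all coordinates odd with
coordinate sum ≡ 1 mod 4, i.e. centers of half the cubes). -/
def RDVertex (p : Fin 3 → ℤ) : Prop :=
  (∀ i, Even (p i)) ∨ ((∀ i, Odd (p i)) ∧ (p 0 + p 1 + p 2) % 4 = 1)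

/-- Edges of the rhombic dodecahedral lattice: a cube center is joined to the eight
corners of its cube, i.e. two vertices are adjacent iff they differ by exactly 1 in
every coordinate (in the scaled coordinates). -/
def RDAdj (p q : Fin 3 → ℤ) : Prop :=
  RDVertex p ∧ RDVertex q ∧ ∀ i, |p i - q i| = 1

/-- One step of the partial order induced by the sweep direction `ω = (1,1,1)`:
an edge whose inner product with `ω` is positive. -/
def RDStep (p q : Fin 3 → ℤ) : Prop :=
  RDAdj p q ∧ 0 < (q 0 - p 0) + (q 1 - p 1) + (q 2 - p 2)

/-- The induced partial order: `u ≼ v` iff there is a causal path of edges from `u` to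
`v`, each edge having positive inner product with `ω = (1,1,1)`. -/
def RDLe (p q : Fin 3 → ℤ) : Prop := Relation.ReflTransGen RDStep p q

/-- The height `ω · p` for the sweep direction `ω = (1,1,1)`. -/
def rdHeight (p : Fin 3 → ℤ) : ℤ := p 0 + p 1 + p 2

def IsRDCenter (p : Fin 3 → ℤ) : Prop := (∀ i, Odd (p i)) ∧ rdHeight p % 4 = 1

lemma rdHeight_add (p q : Fin 3 → ℤ) : rdHeight (p + q) = rdHeight p + rdHeight q := by
  simp only [rdHeight, Pi.add_apply]; ring

lemma funext_fin_three {p q : Fin 3 → ℤ} (h₀ : p 0 = q 0) (h₁ : p 1 = q 1) (h₂ : p 2 = q 2) :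
    p = q := by
  ext i; fin_cases i <;> assumption

lemma Int.unit_four_cycle_cases {x y z w : ℤ} (h₁ : |x - y| = 1) (h₂ : |y - z| = 1)
    (h₃ : |z - w| = 1) (h₄ : |w - x| = 1) :
    (x = z ∨ y = w) ∧ x + z = y + w ∨ x = z ∧ y = w := by
  rw [abs_eq zero_le_one] at h₁ h₂ h₃ h₄
  omega

namespace RDAdj

variable {p q : Fin 3 → ℤ}

lemma symm (h : RDAdj p q) : RDAdj q p :=
  ⟨h.2.1, h.1, fun i => by rw [abs_sub_comm]; exact h.2.2 i⟩

lemma abs_sub_eq_one (h : RDAdj p q) (i : Fin 3) : |p i - q i| = 1 := h.2.2 i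

lemma rdHeight_ne (h : RDAdj p q) : rdHeight p ≠ rdHeight q := by
  have h₀ := h.abs_sub_eq_one 0; have h₁ := h.abs_sub_eq_one 1; have h₂ := h.abs_sub_eq_one 2
  rw [abs_eq zero_le_one] at h₀ h₁ h₂
  unfold rdHeight
  omega

lemma rdStep_of_rdHeight_lt (h : RDAdj p q) (hpq : rdHeight p < rdHeight q) : RDStep p q :=
  ⟨h, by unfold rdHeight at hpq; linarith⟩

lemma odd_iff_even (h : RDAdj p q) (i : Fin 3) : Odd (p i) ↔ Even (q i) := by
  have := h.abs_sub_eq_one i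
  rw [abs_eq zero_le_one] at this
  rw [Int.odd_iff, Int.even_iff]
  omega

lemma isRDCenter_or (h : RDAdj p q) : IsRDCenter p ∨ IsRDCenter q := by
  rcases h.1 with hp | hp
  · rcases h.2.1 with hq | hq
    · exact absurd ((h.odd_iff_even 0).mpr (hq 0)) (Int.not_odd_iff_even.mpr (hp 0))
    · exact .inr hq
  · exact .inl hp

lemma not_isRDCenter_of_isRDCenter (h : RDAdj p q) (hp : IsRDCenter p) : ¬IsRDCenter q :=
  fun hq => Int.not_even_iff_odd.mpr (hq.1 0) ((h.odd_iff_even 0).mp (hp.1 0))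

end RDAdj

lemma RDStep.rdHeight_lt {p q : Fin 3 → ℤ} (h : RDStep p q) : rdHeight p < rdHeight q := by
  unfold rdHeight; linarith [h.2]

lemma RDLe.eq_or_rdHeight_lt {p q : Fin 3 → ℤ} (h : RDLe p q) :
    p = q ∨ rdHeight p < rdHeight q := by
  induction h with
  | refl => exact .inl rfl
  | tail _ hstep ih =>
    have := hstep.rdHeight_lt
    rcases ih with rfl | ih
    exacts [.inr this, .inr (ih.trans this)]

lemma RDLe.antisymm {p q : Fin 3 → ℤ} (h₁ : RDLe p q) (h₂ : RDLe q p) : p = q := by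
  rcases h₁.eq_or_rdHeight_lt with h | h₁
  · exact h
  rcases h₂.eq_or_rdHeight_lt with h | h₂
  · exact h.symm
  exact absurd (h₁.trans h₂) (lt_irrefl _)

section Face

variable {a b c d : Fin 3 → ℤ}

lemma add_eq_add_of_rdHeight_modEq (hac : a ≠ c) (hbd : b ≠ d)
    (h₁ : RDAdj a b) (h₂ : RDAdj b c) (h₃ : RDAdj c d) (h₄ : RDAdj d a)
    (hmod : rdHeight b ≡ rdHeight d [ZMOD 4]) : a + c = b + d := by
  have hcoord (i : Fin 3) := Int.unit_four_cycle_cases (h₁.abs_sub_eq_one i)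
    (h₂.abs_sub_eq_one i) (h₃.abs_sub_eq_one i) (h₄.abs_sub_eq_one i)
  have hunit (i : Fin 3) := (abs_eq zero_le_one).mp (h₁.abs_sub_eq_one i)
  have hac' : ¬(a 0 = c 0 ∧ a 1 = c 1 ∧ a 2 = c 2) :=
    fun ⟨h₀, h₁, h₂⟩ => hac (funext_fin_three h₀ h₁ h₂)
  have hbd' : ¬(b 0 = d 0 ∧ b 1 = d 1 ∧ b 2 = d 2) :=
    fun ⟨h₀, h₁, h₂⟩ => hbd (funext_fin_three h₀ h₁ h₂)
  unfold Int.ModEq rdHeight at hmod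
  have h0 := hcoord 0; have h1 := hcoord 1; have h2 := hcoord 2
  have u0 := hunit 0; have u1 := hunit 1; have u2 := hunit 2
  obtain ⟨e0, e1, e2⟩ :
      a 0 + c 0 = b 0 + d 0 ∧ a 1 + c 1 = b 1 + d 1 ∧ a 2 + c 2 = b 2 + d 2 := by
    rcases h0 with h0 | h0 <;> rcases h1 with h1 | h1 <;> rcases h2 with h2 | h2 <;> omega
  exact funext_fin_three e0 e1 e2

lemma add_eq_add_of_rdAdj_cycle (hac : a ≠ c) (hbd : b ≠ d)
    (h₁ : RDAdj a b) (h₂ : RDAdj b c) (h₃ : RDAdj c d) (h₄ : RDAdj d a) : a + c = b + d := by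
  rcases h₁.isRDCenter_or with ha | hb
  · have hc : IsRDCenter c :=
      h₂.isRDCenter_or.resolve_left (h₁.not_isRDCenter_of_isRDCenter ha)
    rw [add_eq_add_of_rdHeight_modEq hbd hac.symm h₂ h₃ h₄ h₁ (hc.2.trans ha.2.symm), add_comm]
  · have hd : IsRDCenter d :=
      h₄.isRDCenter_or.resolve_right (h₁.symm.not_isRDCenter_of_isRDCenter hb)
    exact add_eq_add_of_rdHeight_modEq hac hbd h₁ h₂ h₃ h₄ (hb.2.trans hd.2.symm)

lemma rdLe_of_rdHeight_lt_neighbours (h₁ : RDAdj a b) (h₂ : RDAdj b c) (h₄ : RDAdj d a)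
    (hpar : a + c = b + d) (hab : rdHeight a < rdHeight b) (had : rdHeight a < rdHeight d) :
    RDLe a b ∧ RDLe a c ∧ RDLe a d := by
  have hbc : rdHeight b < rdHeight c := by
    have := congrArg rdHeight hpar
    rw [rdHeight_add, rdHeight_add] at this
    linarith
  have hab' := h₁.rdStep_of_rdHeight_lt hab
  exact ⟨.single hab', .tail (.single hab') (h₂.rdStep_of_rdHeight_lt hbc),
    .single (h₄.symm.rdStep_of_rdHeight_lt had)⟩

end Face

theorem face_contains_infimum_general (a b c d : Fin 3 → ℤ)
    (hac : a ≠ c) (hbd : b ≠ d)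
    (h₁ : RDAdj a b) (h₂ : RDAdj b c) (h₃ : RDAdj c d) (h₄ : RDAdj d a) :
    ∃! v, v ∈ ({a, b, c, d} : Set (Fin 3 → ℤ)) ∧
      ∀ u ∈ ({a, b, c, d} : Set (Fin 3 → ℤ)), RDLe v u := by
  refine existsUnique_of_exists_of_unique ?_ fun v w ⟨hv, hv_le⟩ ⟨hw, hw_le⟩ =>
    (hv_le w hw).antisymm (hw_le v hv)
  have hpar := add_eq_add_of_rdAdj_cycle hac hbd h₁ h₂ h₃ h₄
  have hheight : rdHeight a + rdHeight c = rdHeight b + rdHeight d := by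
    rw [← rdHeight_add, ← rdHeight_add, hpar]
  simp only [Set.mem_insert_iff, Set.mem_singleton_iff, exists_eq_or_imp, exists_eq_left,
    forall_eq_or_imp, forall_eq]
  rcases h₁.rdHeight_ne.lt_or_gt with hab | hba <;> rcases h₂.rdHeight_ne.lt_or_gt with hbc | hcb
  · exact .inl ⟨.refl, rdLe_of_rdHeight_lt_neighbours h₁ h₂ h₄ hpar hab (by linarith)⟩
  · obtain ⟨hle_a, hle_b, hle_c⟩ := rdLe_of_rdHeight_lt_neighbours h₄ h₁ h₃
      (by rw [add_comm, hpar]) (by linarith) (by linarith)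
    exact .inr <| .inr <| .inr ⟨hle_a, hle_b, hle_c, .refl⟩
  · obtain ⟨hle_c, hle_d, hle_a⟩ := rdLe_of_rdHeight_lt_neighbours h₂ h₃ h₁
      (by rw [← hpar, add_comm]) hbc hba
    exact .inr <| .inl ⟨hle_a, .refl, hle_c, hle_d⟩
  · obtain ⟨hle_d, hle_a, hle_b⟩ := rdLe_of_rdHeight_lt_neighbours h₃ h₄ h₂
      (by rw [add_comm c, hpar, add_comm]) (by linarith) hcb
    exact .inr <| .inr <| .inl ⟨hle_a, hle_b, .refl, hle_d⟩

/-- every face (rhombus, i.e. a 4-cycle of the lattice) contains its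
infimum: among its four vertices there is a unique one below all the others in the
partial order induced by `ω = (1,1,1)`. -/
theorem face_contains_infimum (a b c d : Fin 3 → ℤ)
    (hab : a ≠ b) (hac : a ≠ c) (had : a ≠ d) (hbc : b ≠ c) (hbd : b ≠ d) (hcd : c ≠ d)
    (h₁ : RDAdj a b) (h₂ : RDAdj b c) (h₃ : RDAdj c d) (h₄ : RDAdj d a) :
    ∃! v, v ∈ ({a, b, c, d} : Set (Fin 3 → ℤ)) ∧
      ∀ u ∈ ({a, b, c, d} : Set (Fin 3 → ℤ)), RDLe v u :=
  face_contains_infimum_general a b c d hac hbd h₁ h₂ h₃ h₄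
end
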